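/- (Theorem 2, positivity and separation.) Assume √2·L < 1, J₀ ≥ 0 and g_j ≥ 0 everywhere with g_j(z) > 0 for all z > 0 (j = 1,…,m), and m₀/k₀ + m_j/k_j < I₀·e^{−2k₀ω}/(1 − e^{−k₀ω}) for each j = 1,…,m (condition (C8), with e^{−2k₀ω} in place of the paper's e^{−k₀ω}). Then there exist positive real constants ν₁,…,ν_m and μ₀, μ₁,…,μ_m such that the unique bounded measurable solution ξ of ξ = Tξ satisfies, for all t ∈ ℝ and all j = 1,…,m: ξ₀(t) ≥ μ₀ > 0, ξ_j(t) ≥ μ_j > 0, and ξ₀(t) − ξ_j(t) > ν_j. -/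

import Mathlib

/-- The Euclidean norm on `Fin n → ℝ`. -/
noncomputable def eNorm {n : ℕ} (v : Fin n → ℝ) : ℝ := Real.sqrt (∑ j, v j ^ 2)

/-- The operator `T` of the paper: coordinate `0` (the systemic arterial pressure) gets
`(Tφ)₀(t) = −∫_{−∞}^t e^{−k₀(t−s)} g₀(φ₀(s)−φ₁(s),…,φ₀(s)−φ_m(s)) ds
  + Σ_{θ_i < t} e^{−k₀(t−θ_i)} (I₀ + J₀(φ₀(θ_i)))`,
and the compartment coordinates `j = 1,…,m` (nonzero indices of `Fin (m+1)`) get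
`(Tφ)_j(t) = ∫_{−∞}^t e^{−k_j(t−s)} g_j(φ₀(s)−φ_j(s)) ds`. -/
noncomputable def Tmap (m : ℕ) (θ : ℤ → ℝ) (k : Fin (m + 1) → ℝ) (I₀ : ℝ)
    (g₀ : (Fin m → ℝ) → ℝ) (g : Fin (m + 1) → ℝ → ℝ) (J₀ : ℝ → ℝ)
    (φ : ℝ → Fin (m + 1) → ℝ) : ℝ → Fin (m + 1) → ℝ := fun t j =>
  if j = 0 then
    -(∫ s in Set.Iic t, Real.exp (-(k 0) * (t - s)) * g₀ (fun i => φ s 0 - φ s i.succ))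
      + ∑' i : ℤ, (if θ i < t then Real.exp (-(k 0) * (t - θ i)) * (I₀ + J₀ (φ (θ i) 0)) else 0)
  else
    ∫ s in Set.Iic t, Real.exp (-(k j) * (t - s)) * g j (φ s 0 - φ s j)

/-- The set `Ω`: bounded measurable functions `φ : ℝ → ℝ^{m+1}` with
`|φ₀(t)| ≤ m₀/k₀ + (I₀ + m_J)·e^{k₀ω}/(1 − e^{−k₀ω})` and `|φ_j(t)| ≤ m_j/k_j`. -/
def OmegaSet (m : ℕ) (ω : ℝ) (k mc : Fin (m + 1) → ℝ) (I₀ mJ : ℝ) :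
    Set (ℝ → Fin (m + 1) → ℝ) :=
  {φ | Measurable φ ∧ (∃ B, ∀ t, eNorm (φ t) ≤ B) ∧ ∀ t,
    |φ t 0| ≤ mc 0 / k 0 + (I₀ + mJ) * Real.exp (k 0 * ω) / (1 - Real.exp (-(k 0) * ω)) ∧
    ∀ j, j ≠ 0 → |φ t j| ≤ mc j / k j}

/-!
The coordinates `ξ_j = Tξ_j`, `j ≠ 0`, are exponential averages of `g_j`, so `|ξ_j| ≤ m_j/k_j`.
Since exactly one impulse arrives per period of length `ω`, the impulse sum in `ξ₀` is squeezed
between two geometric series, which gives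
`I₀e^{-2k₀ω}/(1 - e^{-k₀ω}) - m₀/k₀ ≤ ξ₀ ≤ m₀/k₀ + (I₀ + m_J)e^{k₀ω}/(1 - e^{-k₀ω})`.
Condition (C8) then makes `ξ₀` positive and keeps `ξ₀ - ξ_j` in a compact interval `[ν_j, C_j]`
with `ν_j > 0`; there the continuous function `g_j` is at least some `δ_j > 0`, so `ξ_j ≥ δ_j/k_j`.
-/

open MeasureTheory Set Real

section ExpKernel

variable {c : ℝ}

lemma integrableOn_exp_neg_mul_sub_Iic (hc : 0 < c) (t : ℝ) :
    IntegrableOn (fun s => exp (-c * (t - s))) (Iic t) := by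
  refine IntegrableOn.congr_fun ((integrableOn_exp_mul_Iic hc t).const_mul (exp (-c * t)))
    (fun s _ => ?_) measurableSet_Iic
  simp only [← exp_add]; ring_nf

lemma integral_exp_neg_mul_sub_Iic (hc : 0 < c) (t : ℝ) :
    ∫ s in Iic t, exp (-c * (t - s)) = 1 / c := by
  have hsplit : ∀ s, exp (-c * (t - s)) = exp (-c * t) * exp (c * s) := fun s => by
    rw [← exp_add]; ring_nf
  simp_rw [hsplit]
  rw [integral_const_mul, integral_exp_mul_Iic hc, mul_div_assoc', ← exp_add]
  simp

lemma abs_integral_exp_mul_le (hc : 0 < c) {h : ℝ → ℝ} {b : ℝ} (hb : ∀ s, |h s| ≤ b) (t : ℝ) :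
    |∫ s in Iic t, exp (-c * (t - s)) * h s| ≤ b / c := by
  rw [← Real.norm_eq_abs]
  calc ‖∫ s in Iic t, exp (-c * (t - s)) * h s‖
      ≤ ∫ s in Iic t, exp (-c * (t - s)) * b := by
        refine norm_integral_le_of_norm_le ((integrableOn_exp_neg_mul_sub_Iic hc t).mul_const b)
          (.of_forall fun s => ?_)
        rw [Real.norm_eq_abs, abs_mul, abs_of_pos (exp_pos _)]
        exact mul_le_mul_of_nonneg_left (hb s) (exp_pos _).le
    _ = b / c := by rw [integral_mul_const, integral_exp_neg_mul_sub_Iic hc]; ring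

lemma div_le_integral_exp_mul (hc : 0 < c) {h : ℝ → ℝ} (hh : Measurable h) {b δ : ℝ}
    (hb : ∀ s, |h s| ≤ b) (hδ : ∀ s, δ ≤ h s) (t : ℝ) :
    δ / c ≤ ∫ s in Iic t, exp (-c * (t - s)) * h s := by
  have hexp := integrableOn_exp_neg_mul_sub_Iic hc t
  calc δ / c = ∫ s in Iic t, exp (-c * (t - s)) * δ := by
        rw [integral_mul_const, integral_exp_neg_mul_sub_Iic hc]; ring
    _ ≤ ∫ s in Iic t, exp (-c * (t - s)) * h s :=
        setIntegral_mono (hexp.mul_const δ)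
          (hexp.mul_bdd hh.aestronglyMeasurable (Filter.Eventually.of_forall fun s => hb s))
          fun s => mul_le_mul_of_nonneg_left (hδ s) (exp_pos _).le

end ExpKernel

section Impulses

noncomputable def impulseTerm (c : ℝ) (θ u : ℤ → ℝ) (t : ℝ) (i : ℤ) : ℝ :=
  if θ i < t then exp (-c * (t - θ i)) * u i else 0

variable {c ω : ℝ} {θ u : ℤ → ℝ} {t : ℝ}

lemma exp_mul_exp_pow (x y : ℝ) (n : ℕ) : exp x * exp y ^ n = exp (x + n * y) := by
  rw [← exp_nat_mul, ← exp_add]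

lemma tsum_const_mul_geometric {r : ℝ} (hr0 : 0 ≤ r) (hr1 : r < 1) (a : ℝ) :
    ∑' n : ℕ, a * r ^ n = a / (1 - r) := by
  rw [tsum_mul_left, tsum_geometric_of_lt_one hr0 hr1, div_eq_mul_inv]

lemma impulseTerm_nonneg (hu : ∀ i, 0 ≤ u i) (i : ℤ) : 0 ≤ impulseTerm c θ u t i := by
  unfold impulseTerm; split_ifs
  exacts [mul_nonneg (exp_pos _).le (hu i), le_rfl]


lemma exists_int_mul_lt_le_add_one_mul (hω : 0 < ω) (t : ℝ) :
    ∃ M : ℤ, M * ω < t ∧ t ≤ (M + 1) * ω := by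
  obtain ⟨M, ⟨h1, h2⟩, -⟩ := existsUnique_sub_zsmul_mem_Ioc hω t 0
  exact ⟨M, by simp only [zsmul_eq_mul] at h1 h2; constructor <;> linarith⟩

lemma impulseTerm_eq_zero_of_lt (hθ : ∀ i : ℤ, i * ω ≤ θ i ∧ θ i < (i + 1) * ω)
    (hω : 0 ≤ ω) {M : ℤ} (hM : t ≤ (M + 1) * ω) {i : ℤ} (hi : M < i) :
    impulseTerm c θ u t i = 0 := by
  have hiM : (M : ℝ) + 1 ≤ i := by exact_mod_cast hi
  refine if_neg (not_lt.mpr ?_)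
  nlinarith [(hθ i).1]

lemma impulseTerm_sub_le (hθ : ∀ i : ℤ, i * ω ≤ θ i ∧ θ i < (i + 1) * ω) (hc : 0 < c) {A : ℝ}
    (hu : ∀ i, 0 ≤ u i) (huA : ∀ i, u i ≤ A) {M : ℤ} (hM : M * ω < t) (n : ℕ) :
    impulseTerm c θ u t (M - n) ≤ A * exp (c * ω) * exp (-c * ω) ^ n := by
  unfold impulseTerm
  split_ifs
  · have hθM := (hθ (M - n)).2
    push_cast at hθM
    have hexp : exp (-c * (t - θ (M - n))) ≤ exp (c * ω) * exp (-c * ω) ^ n := by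
      rw [exp_mul_exp_pow, exp_le_exp]
      nlinarith
    calc exp (-c * (t - θ (M - n))) * u (M - n) ≤ exp (c * ω) * exp (-c * ω) ^ n * A :=
          mul_le_mul hexp (huA _) (hu _) (by positivity)
      _ = A * exp (c * ω) * exp (-c * ω) ^ n := by ring
  · have := (hu 0).trans (huA 0)
    positivity

/-- The impulse of period `M - 1 - n` came before `t`, at most `(n + 2)ω` earlier: this is where
the factor `e^{-2cω}` of condition (C8) comes from. -/
lemma le_impulseTerm_sub (hθ : ∀ i : ℤ, i * ω ≤ θ i ∧ θ i < (i + 1) * ω) (hc : 0 < c) {B : ℝ}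
    (hB : 0 ≤ B) (huB : ∀ i, B ≤ u i) {M : ℤ} (hM : M * ω < t) (hM' : t ≤ (M + 1) * ω) (n : ℕ) :
    B * exp (-(2 * c * ω)) * exp (-c * ω) ^ n ≤ impulseTerm c θ u t (M - 1 - n) := by
  obtain ⟨hθl, hθr⟩ := hθ (M - 1 - n)
  push_cast at hθl hθr
  have hn : (0 : ℝ) ≤ n := n.cast_nonneg
  rw [impulseTerm, if_pos (by nlinarith)]
  have hexp : exp (-(2 * c * ω)) * exp (-c * ω) ^ n ≤ exp (-c * (t - θ (M - 1 - n))) := by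
    rw [exp_mul_exp_pow, exp_le_exp]
    nlinarith
  calc B * exp (-(2 * c * ω)) * exp (-c * ω) ^ n
      = exp (-(2 * c * ω)) * exp (-c * ω) ^ n * B := by ring
    _ ≤ exp (-c * (t - θ (M - 1 - n))) * u (M - 1 - n) :=
        mul_le_mul hexp (huB _) hB (exp_pos _).le

lemma exp_neg_mul_lt_one (hc : 0 < c) (hω : 0 < ω) : exp (-c * ω) < 1 :=
  exp_lt_one_iff.mpr (by nlinarith)

lemma sub_nat_injective (M : ℤ) : Function.Injective fun n : ℕ => M - n :=
  fun a b h => by simpa using h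

lemma impulseTerm_eq_zero_of_notMem_range (hθ : ∀ i : ℤ, i * ω ≤ θ i ∧ θ i < (i + 1) * ω)
    (hω : 0 ≤ ω) {M : ℤ} (hM : t ≤ (M + 1) * ω) {i : ℤ}
    (hi : i ∉ range fun n : ℕ => M - n) : impulseTerm c θ u t i = 0 := by
  refine impulseTerm_eq_zero_of_lt hθ hω hM (not_le.mp fun hiM => hi ⟨(M - i).toNat, ?_⟩)
  simp only
  omega

lemma summable_impulseTerm (hθ : ∀ i : ℤ, i * ω ≤ θ i ∧ θ i < (i + 1) * ω) (hω : 0 < ω)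
    (hc : 0 < c) {A : ℝ} (hu : ∀ i, 0 ≤ u i) (huA : ∀ i, u i ≤ A) (t : ℝ) :
    Summable (impulseTerm c θ u t) := by
  obtain ⟨M, hM, hM'⟩ := exists_int_mul_lt_le_add_one_mul hω t
  refine ((sub_nat_injective M).summable_iff
    fun i hi => impulseTerm_eq_zero_of_notMem_range hθ hω.le hM' hi).mp ?_
  exact .of_nonneg_of_le (fun n => impulseTerm_nonneg hu _)
    (impulseTerm_sub_le hθ hc hu huA hM)
    ((summable_geometric_of_lt_one (exp_pos _).le (exp_neg_mul_lt_one hc hω)).mul_left _)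

lemma tsum_impulseTerm_le (hθ : ∀ i : ℤ, i * ω ≤ θ i ∧ θ i < (i + 1) * ω) (hω : 0 < ω)
    (hc : 0 < c) {A : ℝ} (hu : ∀ i, 0 ≤ u i) (huA : ∀ i, u i ≤ A) (t : ℝ) :
    ∑' i, impulseTerm c θ u t i ≤ A * exp (c * ω) / (1 - exp (-c * ω)) := by
  obtain ⟨M, hM, hM'⟩ := exists_int_mul_lt_le_add_one_mul hω t
  have hgeom := summable_geometric_of_lt_one (exp_pos _).le (exp_neg_mul_lt_one hc hω)
  rw [← (sub_nat_injective M).tsum_eq (Function.support_subset_iff'.mpr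
      fun i hi => impulseTerm_eq_zero_of_notMem_range hθ hω.le hM' hi),
    ← tsum_const_mul_geometric (exp_pos _).le (exp_neg_mul_lt_one hc hω)]
  exact Summable.tsum_le_tsum (impulseTerm_sub_le hθ hc hu huA hM)
    (.of_nonneg_of_le (fun n => impulseTerm_nonneg hu _) (impulseTerm_sub_le hθ hc hu huA hM)
      (hgeom.mul_left _)) (hgeom.mul_left _)

lemma le_tsum_impulseTerm (hθ : ∀ i : ℤ, i * ω ≤ θ i ∧ θ i < (i + 1) * ω) (hω : 0 < ω)
    (hc : 0 < c) {B : ℝ} (hB : 0 ≤ B) (huB : ∀ i, B ≤ u i)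
    (hsum : Summable (impulseTerm c θ u t)) :
    B * exp (-(2 * c * ω)) / (1 - exp (-c * ω)) ≤ ∑' i, impulseTerm c θ u t i := by
  obtain ⟨M, hM, hM'⟩ := exists_int_mul_lt_le_add_one_mul hω t
  rw [← tsum_const_mul_geometric (exp_pos _).le (exp_neg_mul_lt_one hc hω)]
  exact Summable.tsum_le_tsum_of_inj _ (sub_nat_injective (M - 1))
    (fun i _ => impulseTerm_nonneg (fun i => hB.trans (huB i)) i)
    (le_impulseTerm_sub hθ hc hB huB hM hM')
    ((summable_geometric_of_lt_one (exp_pos _).le (exp_neg_mul_lt_one hc hω)).mul_left _) hsum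

end Impulses

section Tmap

variable {m : ℕ} {θ : ℤ → ℝ} {k : Fin (m + 1) → ℝ} {I₀ : ℝ} {g₀ : (Fin m → ℝ) → ℝ}
  {g : Fin (m + 1) → ℝ → ℝ} {J₀ : ℝ → ℝ} (φ : ℝ → Fin (m + 1) → ℝ)

lemma Tmap_apply_zero (t : ℝ) :
    Tmap m θ k I₀ g₀ g J₀ φ t 0 =
      -(∫ s in Iic t, exp (-(k 0) * (t - s)) * g₀ (fun i => φ s 0 - φ s i.succ))
        + ∑' i, impulseTerm (k 0) θ (fun i => I₀ + J₀ (φ (θ i) 0)) t i :=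
  if_pos rfl

lemma Tmap_apply_of_ne_zero {j : Fin (m + 1)} (hj : j ≠ 0) (t : ℝ) :
    Tmap m θ k I₀ g₀ g J₀ φ t j = ∫ s in Iic t, exp (-(k j) * (t - s)) * g j (φ s 0 - φ s j) :=
  if_neg hj

lemma Tmap_apply_zero_mem_Icc {ω m₀ mJ : ℝ} (hθ : ∀ i : ℤ, i * ω ≤ θ i ∧ θ i < (i + 1) * ω)
    (hω : 0 < ω) (hk : 0 < k 0) (hI : 0 ≤ I₀) (hJ : ∀ a, 0 ≤ J₀ a) (hJbd : ∀ a, |J₀ a| ≤ mJ)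
    (hg₀bd : ∀ z, |g₀ z| ≤ m₀) (t : ℝ) :
    Tmap m θ k I₀ g₀ g J₀ φ t 0 ∈
      Icc (I₀ * exp (-(2 * k 0 * ω)) / (1 - exp (-(k 0) * ω)) - m₀ / k 0)
        (m₀ / k 0 + (I₀ + mJ) * exp (k 0 * ω) / (1 - exp (-(k 0) * ω))) := by
  have hu : ∀ i, I₀ ≤ I₀ + J₀ (φ (θ i) 0) := fun i => le_add_of_nonneg_right (hJ _)
  have hu0 : ∀ i, 0 ≤ I₀ + J₀ (φ (θ i) 0) := fun i => hI.trans (hu i)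
  have huA : ∀ i, I₀ + J₀ (φ (θ i) 0) ≤ I₀ + mJ := fun i =>
    add_le_add_right ((le_abs_self _).trans (hJbd _)) I₀
  have hint := abs_le.mp (abs_integral_exp_mul_le hk
    (h := fun s => g₀ fun i => φ s 0 - φ s i.succ) (fun s => hg₀bd _) t)
  have hlow := le_tsum_impulseTerm hθ hω hk hI hu (summable_impulseTerm hθ hω hk hu0 huA t)
  have hupp := tsum_impulseTerm_le hθ hω hk hu0 huA t
  rw [Tmap_apply_zero]
  constructor <;> linarith [hint.1, hint.2]

lemma abs_Tmap_apply_le {j : Fin (m + 1)} (hj : j ≠ 0) (hk : 0 < k j) {b : ℝ}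
    (hgbd : ∀ a, |g j a| ≤ b) (t : ℝ) :
    |Tmap m θ k I₀ g₀ g J₀ φ t j| ≤ b / k j := by
  rw [Tmap_apply_of_ne_zero φ hj]
  exact abs_integral_exp_mul_le hk (fun s => hgbd _) t

lemma div_le_Tmap_apply {j : Fin (m + 1)} (hj : j ≠ 0) (hk : 0 < k j) (hφ : Measurable φ)
    (hg : Continuous (g j)) {b δ : ℝ} (hgbd : ∀ a, |g j a| ≤ b)
    (hδ : ∀ s, δ ≤ g j (φ s 0 - φ s j)) (t : ℝ) :
    δ / k j ≤ Tmap m θ k I₀ g₀ g J₀ φ t j := by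
  rw [Tmap_apply_of_ne_zero φ hj]
  refine div_le_integral_exp_mul hk (hg.measurable.comp ?_) (fun s => hgbd _) hδ t
  exact (measurable_pi_apply 0 |>.comp hφ).sub (measurable_pi_apply j |>.comp hφ)

end Tmap

theorem stmt11_general
    (m : ℕ) (hm : 1 ≤ m) (ω : ℝ) (hω : 0 < ω) (θ : ℤ → ℝ)
    (hθ : ∀ i : ℤ, (i : ℝ) * ω ≤ θ i ∧ θ i < ((i : ℝ) + 1) * ω)
    (k : Fin (m + 1) → ℝ) (hk : ∀ j, 0 < k j) (I₀ : ℝ) (hI : 0 < I₀)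
    (g₀ : (Fin m → ℝ) → ℝ) (g : Fin (m + 1) → ℝ → ℝ) (J₀ : ℝ → ℝ)
    (l : Fin (m + 1) → ℝ) (mc : Fin (m + 1) → ℝ) (mJ : ℝ)
    (hglip : ∀ j, j ≠ 0 → ∀ a b : ℝ, |g j a - g j b| ≤ l j * |a - b|)
    (hg₀bd : ∀ z, |g₀ z| ≤ mc 0)
    (hgbd : ∀ j, j ≠ 0 → ∀ a, |g j a| ≤ mc j)
    (hJbd : ∀ a, |J₀ a| ≤ mJ)
    (hJpos : ∀ a : ℝ, 0 ≤ J₀ a)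
    (hgpos' : ∀ j, j ≠ 0 → ∀ z : ℝ, 0 < z → 0 < g j z)
    (hC8 : ∀ j : Fin (m + 1), j ≠ 0 →
      mc 0 / k 0 + mc j / k j < I₀ * Real.exp (-(2 * k 0 * ω)) / (1 - Real.exp (-(k 0) * ω))) :
    ∃ ν μ : Fin (m + 1) → ℝ, (∀ j, j ≠ 0 → 0 < ν j) ∧ (∀ j, 0 < μ j) ∧
      ∀ ξ : ℝ → Fin (m + 1) → ℝ,
        (Measurable ξ ∧ (∃ B, ∀ t, eNorm (ξ t) ≤ B) ∧ ∀ t, ξ t = Tmap m θ k I₀ g₀ g J₀ ξ t) →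
        ∀ t : ℝ, μ 0 ≤ ξ t 0 ∧ ∀ j, j ≠ 0 → μ j ≤ ξ t j ∧ ν j < ξ t 0 - ξ t j := by
  set μ₀ := I₀ * exp (-(2 * k 0 * ω)) / (1 - exp (-(k 0) * ω)) - mc 0 / k 0
  set C := mc 0 / k 0 + (I₀ + mJ) * exp (k 0 * ω) / (1 - exp (-(k 0) * ω))
  obtain ⟨ν, hν_def⟩ : ∃ ν : Fin (m + 1) → ℝ, ∀ j, ν j = (μ₀ - mc j / k j) / 2 := ⟨_, fun _ => rfl⟩
  have hν : ∀ j, j ≠ 0 → 0 < ν j := fun j hj => by linarith [hC8 j hj, hν_def j]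
  have hμ₀ : 0 < μ₀ := by
    have h1 : (1 : Fin (m + 1)) ≠ 0 := Fin.ext_iff.not.mpr (by simp; omega)
    have := div_nonneg ((abs_nonneg _).trans (hgbd 1 h1 0)) (hk 1).le
    linarith [hν 1 h1, hν_def 1]
  have hgcont : ∀ j, j ≠ 0 → Continuous (g j) := fun j hj =>
    (LipschitzWith.of_dist_le' (by simpa [Real.dist_eq] using hglip j hj)).continuous
  have hδ : ∀ j, ∃ δ, 0 < δ ∧ (j ≠ 0 → ∀ z ∈ Icc (ν j) (C + mc j / k j), δ ≤ g j z) := fun j => by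
    by_cases hj : j = 0
    · exact ⟨1, one_pos, fun h => absurd hj h⟩
    obtain ⟨δ, hδ, hδle⟩ := isCompact_Icc.exists_forall_le' (hgcont j hj).continuousOn
      fun z hz => hgpos' j hj z ((hν j hj).trans_le hz.1)
    exact ⟨δ, hδ, fun _ => hδle⟩
  choose δ hδ0 hδ using hδ
  refine ⟨ν, fun j => if j = 0 then μ₀ else δ j / k j, hν, fun j => ?_, ?_⟩
  · dsimp only
    split_ifs
    exacts [hμ₀, div_pos (hδ0 j) (hk j)]
  rintro ξ ⟨hξ, -, hfix⟩
  have h0 : ∀ s, ξ s 0 ∈ Icc μ₀ C := fun s =>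
    hfix s ▸ Tmap_apply_zero_mem_Icc ξ hθ hω (hk 0) hI.le hJpos hJbd hg₀bd s
  have hbd : ∀ s j, j ≠ 0 → |ξ s j| ≤ mc j / k j := fun s j hj =>
    hfix s ▸ abs_Tmap_apply_le ξ hj (hk j) (hgbd j hj) s
  have hsep : ∀ s j, j ≠ 0 → ν j < ξ s 0 - ξ s j := fun s j hj => by
    linarith [(h0 s).1, (abs_le.mp (hbd s j hj)).2, hν j hj, hν_def j]
  intro t
  refine ⟨by simpa using (h0 t).1, fun j hj => ⟨?_, hsep t j hj⟩⟩
  dsimp only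
  rw [if_neg hj, hfix t]
  refine div_le_Tmap_apply ξ hj (hk j) hξ (hgcont j hj) (hgbd j hj)
    (fun s => hδ j hj _ ⟨(hsep s j hj).le, ?_⟩) t
  linarith [(h0 s).2, (abs_le.mp (hbd s j hj)).1]

/-- Theorem 2, positivity and separation: Assume `√2·L < 1`, `J₀ ≥ 0`,
`g_j ≥ 0` with `g_j(z) > 0` for `z > 0`, and `m₀/k₀ + m_j/k_j < I₀·e^{−2k₀ω}/(1 − e^{−k₀ω})`
for each `j` (condition (C8)). Then there exist positive constants `ν_j` and `μ_j` such that
the unique bounded measurable fixed point `ξ = Tξ` satisfies `ξ₀(t) ≥ μ₀ > 0`,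
`ξ_j(t) ≥ μ_j > 0`, and `ξ₀(t) − ξ_j(t) > ν_j` for all `t` and `j = 1,…,m`. -/
theorem stmt11
    (m : ℕ) (hm : 1 ≤ m) (ω : ℝ) (hω : 0 < ω) (θ : ℤ → ℝ)
    (hθ : ∀ i : ℤ, (i : ℝ) * ω ≤ θ i ∧ θ i < ((i : ℝ) + 1) * ω)
    (k : Fin (m + 1) → ℝ) (hk : ∀ j, 0 < k j) (I₀ : ℝ) (hI : 0 < I₀)
    (g₀ : (Fin m → ℝ) → ℝ) (g : Fin (m + 1) → ℝ → ℝ) (J₀ : ℝ → ℝ)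
    (l : Fin (m + 1) → ℝ) (lJ : ℝ) (mc : Fin (m + 1) → ℝ) (mJ : ℝ)
    (hl : ∀ j, 0 ≤ l j) (hlJ : 0 ≤ lJ) (hmc : ∀ j, 0 ≤ mc j) (hmJ : 0 ≤ mJ)
    (hg₀lip : ∀ z w : Fin m → ℝ, |g₀ z - g₀ w| ≤ l 0 * eNorm (fun i => z i - w i))
    (hglip : ∀ j, j ≠ 0 → ∀ a b : ℝ, |g j a - g j b| ≤ l j * |a - b|)
    (hJlip : ∀ a b : ℝ, |J₀ a - J₀ b| ≤ lJ * |a - b|)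
    (hg₀bd : ∀ z, |g₀ z| ≤ mc 0)
    (hgbd : ∀ j, j ≠ 0 → ∀ a, |g j a| ≤ mc j)
    (hJbd : ∀ a, |J₀ a| ≤ mJ)
    (hL : Real.sqrt 2 * Real.sqrt ((l 0 * Real.sqrt (2 * m) / k 0 + lJ * Real.exp (k 0 * ω) / (1 - Real.exp (-(k 0) * ω))) ^ 2 + ∑ i : Fin m, (l i.succ / k i.succ) ^ 2) < 1)
    (hJpos : ∀ a : ℝ, 0 ≤ J₀ a)
    (hgpos : ∀ j, j ≠ 0 → ∀ a : ℝ, 0 ≤ g j a)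
    (hgpos' : ∀ j, j ≠ 0 → ∀ z : ℝ, 0 < z → 0 < g j z)
    (hC8 : ∀ j : Fin (m + 1), j ≠ 0 →
      mc 0 / k 0 + mc j / k j < I₀ * Real.exp (-(2 * k 0 * ω)) / (1 - Real.exp (-(k 0) * ω))) :
    ∃ ν μ : Fin (m + 1) → ℝ, (∀ j, j ≠ 0 → 0 < ν j) ∧ (∀ j, 0 < μ j) ∧
      ∀ ξ : ℝ → Fin (m + 1) → ℝ,
        (Measurable ξ ∧ (∃ B, ∀ t, eNorm (ξ t) ≤ B) ∧ ∀ t, ξ t = Tmap m θ k I₀ g₀ g J₀ ξ t) →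
        ∀ t : ℝ, μ 0 ≤ ξ t 0 ∧ ∀ j, j ≠ 0 → μ j ≤ ξ t j ∧ ν j < ξ t 0 - ξ t j :=
  stmt11_general m hm ω hω θ hθ k hk I₀ hI g₀ g J₀ l mc mJ hglip hg₀bd hgbd hJbd hJpos hgpos' hC8
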